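/- Let μ be a probability measure on ℝ^d and {D_t} a family of trimmed regions for μ. Then for every t ∈ (0,1), ∫_{D_t} (1/μ_{τ(x)}) μ(dx) = log(1/μ_t), where μ_v = μ(Q_v) and τ(x) = inf{s : x ∈ D_s}. -/

import Mathlib

open MeasureTheory Set Real Filter

noncomputable section

/-- A family of *trimmed regions* for a probability measure `μ` on `ℝ^d`:
closed sets `D t`, `t ∈ [0,1]`, nondecreasing, with `μ (D 0) = 0`, `μ (D t) < 1`
for `t < 1`, `D 1 = ℝ^d`, left jumps `μ`-null, and right-continuity. -/
structure TrimmedFamily (d : ℕ) (μ : Measure (Fin d → ℝ)) : Type where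
  D : ℝ → Set (Fin d → ℝ)
  isClosed : ∀ t ∈ Icc (0:ℝ) 1, IsClosed (D t)
  mono : ∀ s t : ℝ, 0 ≤ s → s ≤ t → t ≤ 1 → D s ⊆ D t
  null_zero : μ (D 0) = 0
  meas_lt_one : ∀ t : ℝ, 0 ≤ t → t < 1 → μ (D t) < 1
  one_eq_univ : D 1 = univ
  left_jump_null : ∀ t : ℝ, 0 < t → t ≤ 1 → μ (D t \ ⋃ s ∈ Ico (0:ℝ) t, D s) = 0
  right_cont : ∀ t : ℝ, 0 ≤ t → t < 1 → D t = ⋂ s ∈ Ioc t (1:ℝ), D s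

namespace TrimmedFamily

variable {d : ℕ} {μ : Measure (Fin d → ℝ)} (T : TrimmedFamily d μ)

/-- `Q t = ℝ^d \ D t`. -/
def Q (t : ℝ) : Set (Fin d → ℝ) := (T.D t)ᶜ

/-- `τ(x) = inf {t ∈ [0,1] : x ∈ D t}`. -/
def tau (x : Fin d → ℝ) : ℝ := sInf {t | t ∈ Icc (0:ℝ) 1 ∧ x ∈ T.D t}

/-- `μ_t = μ(Q_t)` (as a real number). -/
def muQ (t : ℝ) : ℝ := (μ (T.Q t)).toReal

/-- `G_t = (1/μ(Q_t)) ∫_{Q_t} g dμ`. -/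
def G (g : (Fin d → ℝ) → ℝ) (t : ℝ) : ℝ := (∫ y in T.Q t, g y ∂μ) / T.muQ t

end TrimmedFamily

/-- The entropy `Ent_μ g = ∫ g log g dμ − (∫ g dμ) log (∫ g dμ)`
(with the convention `0 log 0 = 0`, which is automatic since `Real.log 0 = 0`). -/
def entropy {α : Type*} [MeasurableSpace α] (μ : Measure α) (g : α → ℝ) : ℝ :=
  (∫ x, g x * Real.log (g x) ∂μ) - (∫ x, g x ∂μ) * Real.log (∫ x, g x ∂μ)

/-!
Put `ν = μ.map τ` and `F = cdf ν`. Since `{τ ≤ s} = D_s` for `s ∈ [0,1]`, we have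
`μ(D_s) = F s` and `μ_s = 1 - F s`. Condition (iii) says exactly that `ν` has no atoms, so `F` is
continuous and, by the probability integral transform, `F` pushes `ν` forward to the uniform
distribution on `[0,1]`. Hence
`∫_{D_t} μ_{τ(x)}⁻¹ dμ = ∫_{s ≤ t} (1 - F s)⁻¹ dν = ∫_0^{F t} (1 - u)⁻¹ du = -log (1 - F t)`.
-/

open ProbabilityTheory Function

lemma Iic_inter_Icc {α : Type*} [LinearOrder α] {a b c : α} :
    Iic c ∩ Icc a b = Icc a (min c b) := by
  ext
  simp only [mem_inter_iff, mem_Iic, mem_Icc, le_min_iff]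
  tauto

lemma Monotone.preimage_Iic_eq_Iic_sSup {α β : Type*} [ConditionallyCompleteLinearOrder α]
    [TopologicalSpace α] [OrderTopology α] [DenselyOrdered α] [NoMaxOrder α] [LinearOrder β]
    [TopologicalSpace β] [OrderClosedTopology β] {f : α → β} (hf : Monotone f) (hc : Continuous f)
    {u : β} (hne : (f ⁻¹' Iic u).Nonempty) (hbdd : BddAbove (f ⁻¹' Iic u)) :
    f ⁻¹' Iic u = Iic (sSup (f ⁻¹' Iic u)) ∧ f (sSup (f ⁻¹' Iic u)) = u := by
  set v := sSup (f ⁻¹' Iic u)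
  have hv : f v ≤ u := (isClosed_Iic.preimage hc).csSup_mem hne hbdd
  refine ⟨Subset.antisymm (fun s hs => le_csSup hbdd hs) fun s hs => (hf hs).trans hv, ?_⟩
  refine le_antisymm hv (_root_.ge_of_tendsto (hc.continuousAt.tendsto.mono_left
    (nhdsWithin_le_nhds (s := Ioi v))) ?_)
  filter_upwards [self_mem_nhdsWithin] with s hs
  exact (not_le.1 fun h => not_le.2 hs (le_csSup hbdd h)).le

lemma integral_Icc_inv_one_sub {c : ℝ} (hc0 : 0 ≤ c) (hc1 : c < 1) :
    ∫ u in Icc 0 c, (1 - u)⁻¹ = -log (1 - c) := by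
  rw [integral_Icc_eq_integral_Ioc, ← intervalIntegral.integral_of_le hc0,
    intervalIntegral.integral_comp_sub_left (fun v => v⁻¹), sub_zero,
    integral_inv (notMem_uIcc_of_lt (by linarith) one_pos)]
  simp

section ProbabilityIntegralTransform

variable {ν : Measure ℝ} [IsProbabilityMeasure ν] [NullSingletonClass ν]

lemma continuous_cdf_of_nullSingletonClass : Continuous (cdf ν) := by
  refine continuous_iff_continuousAt.2 fun x => ?_
  have h : ENNReal.ofReal (cdf ν x - leftLim (cdf ν) x) = 0 := by
    rw [← StieltjesFunction.measure_singleton, measure_cdf, measure_singleton]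
  rw [(monotone_cdf ν).continuousAt_iff_leftLim_eq_rightLim, StieltjesFunction.rightLim_eq]
  exact le_antisymm ((monotone_cdf ν).leftLim_le le_rfl) (by linarith [ENNReal.ofReal_eq_zero.1 h])

lemma measure_cdf_preimage_Iic (u : ℝ) : ν (cdf ν ⁻¹' Iic u) = ENNReal.ofReal (min u 1) := by
  rcases lt_or_ge u 0 with hu0 | hu0
  · have : cdf ν ⁻¹' Iic u = ∅ :=
      eq_empty_of_forall_notMem fun s hs => (hu0.trans_le (cdf_nonneg ν s)).not_ge hs
    rw [this, measure_empty, ENNReal.ofReal_of_nonpos ((min_le_left u 1).trans hu0.le)]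
  rcases le_or_gt 1 u with hu1 | hu1
  · have : cdf ν ⁻¹' Iic u = univ := eq_univ_of_forall fun s => (cdf_le_one ν s).trans hu1
    rw [this, measure_univ, min_eq_right hu1, ENNReal.ofReal_one]
  rw [min_eq_left hu1.le]
  obtain ⟨b, hb⟩ := ((tendsto_cdf_atTop ν).eventually (lt_mem_nhds hu1)).exists_forall_of_atTop
  have hbdd : BddAbove (cdf ν ⁻¹' Iic u) := ⟨b, fun s hs => not_lt.1 fun h => (hb s h.le).not_ge hs⟩
  rcases (cdf ν ⁻¹' Iic u).eq_empty_or_nonempty with hemp | hne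
  · rw [hemp, measure_empty, eq_comm, ENNReal.ofReal_eq_zero]
    by_contra! hu
    obtain ⟨a, ha⟩ := ((tendsto_cdf_atBot ν).eventually (gt_mem_nhds hu)).exists
    exact (eq_empty_iff_forall_notMem.1 hemp) a ha.le
  obtain ⟨hIic, hv⟩ := (monotone_cdf ν).preimage_Iic_eq_Iic_sSup
    continuous_cdf_of_nullSingletonClass hne hbdd
  rw [hIic, ← ofReal_cdf, hv]

lemma map_cdf_eq_restrict_Icc : ν.map (cdf ν) = volume.restrict (Icc 0 1) := by
  refine Measure.ext_of_Iic _ _ fun u => ?_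
  rw [Measure.map_apply (monotone_cdf ν).measurable measurableSet_Iic, measure_cdf_preimage_Iic,
    Measure.restrict_apply measurableSet_Iic, Iic_inter_Icc, Real.volume_Icc, sub_zero]

lemma setIntegral_Iic_comp_cdf {h : ℝ → ℝ} (hh : Measurable h) (t : ℝ) :
    ∫ s in Iic t, h (cdf ν s) ∂ν = ∫ u in Icc 0 (cdf ν t), h u := by
  have hmeas := (monotone_cdf ν).measurable
  have hsub : Iic t ⊆ cdf ν ⁻¹' Iic (cdf ν t) := fun s hs => monotone_cdf ν hs
  have hle : ν (cdf ν ⁻¹' Iic (cdf ν t)) ≤ ν (Iic t) := by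
    rw [measure_cdf_preimage_Iic, min_eq_left (cdf_le_one ν t), ofReal_cdf]
  calc ∫ s in Iic t, h (cdf ν s) ∂ν
      = ∫ s in cdf ν ⁻¹' Iic (cdf ν t), h (cdf ν s) ∂ν :=
        setIntegral_congr_set (ae_eq_of_subset_of_measure_ge hsub hle
          measurableSet_Iic.nullMeasurableSet (measure_ne_top ν _))
    _ = ∫ u in Iic (cdf ν t), h u ∂(ν.map (cdf ν)) :=
        (setIntegral_map measurableSet_Iic hh.aestronglyMeasurable hmeas.aemeasurable).symm
    _ = ∫ u in Icc 0 (cdf ν t), h u := by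
        rw [map_cdf_eq_restrict_Icc, Measure.restrict_restrict measurableSet_Iic, Iic_inter_Icc,
          min_eq_left (cdf_le_one ν t)]

end ProbabilityIntegralTransform

namespace TrimmedFamily

variable {d : ℕ} {μ : Measure (Fin d → ℝ)} (T : TrimmedFamily d μ)

lemma measurableSet_D {t : ℝ} (ht : t ∈ Icc (0:ℝ) 1) : MeasurableSet (T.D t) :=
  (T.isClosed t ht).measurableSet

lemma one_mem_setOf_mem_D (x : Fin d → ℝ) : (1:ℝ) ∈ {t | t ∈ Icc (0:ℝ) 1 ∧ x ∈ T.D t} :=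
  ⟨right_mem_Icc.2 zero_le_one, by simp [T.one_eq_univ]⟩

lemma tau_mem_Icc (x : Fin d → ℝ) : T.tau x ∈ Icc (0:ℝ) 1 :=
  ⟨le_csInf ⟨1, T.one_mem_setOf_mem_D x⟩ fun _ hs => hs.1.1,
   csInf_le ⟨0, fun _ hs => hs.1.1⟩ (T.one_mem_setOf_mem_D x)⟩

lemma tau_le_iff_mem {t : ℝ} {x : Fin d → ℝ} (ht : t ∈ Icc (0:ℝ) 1) :
    T.tau x ≤ t ↔ x ∈ T.D t := by
  refine ⟨fun h => ?_, fun hx => csInf_le ⟨0, fun _ hs => hs.1.1⟩ ⟨ht, hx⟩⟩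
  rcases ht.2.eq_or_lt with rfl | ht1
  · simp [T.one_eq_univ]
  rw [T.right_cont t ht.1 ht1]
  refine mem_iInter₂.2 fun s hs => ?_
  obtain ⟨r, hr, hrs⟩ := exists_lt_of_csInf_lt ⟨1, T.one_mem_setOf_mem_D x⟩ (h.trans_lt hs.1)
  exact T.mono r s hr.1.1 hrs.le hs.2 hr.2

lemma preimage_tau_Iic {t : ℝ} (ht : t ∈ Icc (0:ℝ) 1) : T.tau ⁻¹' Iic t = T.D t :=
  ext fun _ => T.tau_le_iff_mem ht

lemma measurable_tau : Measurable T.tau := by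
  refine measurable_of_Iic fun v => ?_
  rcases lt_or_ge v 0 with hv0 | hv0
  · convert MeasurableSet.empty
    exact eq_empty_of_forall_notMem fun x hx => (hv0.trans_le (T.tau_mem_Icc x).1).not_ge hx
  rcases le_or_gt 1 v with hv1 | hv1
  · convert MeasurableSet.univ
    exact eq_univ_of_forall fun x => (T.tau_mem_Icc x).2.trans hv1
  rw [T.preimage_tau_Iic ⟨hv0, hv1.le⟩]
  exact T.measurableSet_D ⟨hv0, hv1.le⟩

instance nullSingletonClass_map_tau : NullSingletonClass (μ.map T.tau) := by
  refine ⟨fun s => ?_⟩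
  rw [Measure.map_apply T.measurable_tau (measurableSet_singleton s)]
  by_cases hs : s ∈ Icc (0:ℝ) 1
  swap
  · exact measure_mono_null (fun x (hx : T.tau x = s) => (hs (hx ▸ T.tau_mem_Icc x)).elim)
      measure_empty
  rcases hs.1.eq_or_lt with rfl | hs0
  · exact measure_mono_null (fun x (hx : T.tau x = 0) => (T.tau_le_iff_mem hs).1 hx.le) T.null_zero
  refine measure_mono_null (fun x (hx : T.tau x = s) => ?_) (T.left_jump_null s hs0 hs.2)
  refine ⟨(T.tau_le_iff_mem hs).1 hx.le, ?_⟩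
  simp only [mem_iUnion, not_exists]
  intro r hr hxr
  have := (T.tau_le_iff_mem ⟨hr.1, hr.2.le.trans hs.2⟩).2 hxr
  exact hr.2.not_ge (hx ▸ this)

variable [IsProbabilityMeasure μ]

instance isProbabilityMeasure_map_tau :
    IsProbabilityMeasure (μ.map T.tau) :=
  Measure.isProbabilityMeasure_map T.measurable_tau.aemeasurable

lemma cdf_map_tau {t : ℝ} (ht : t ∈ Icc (0:ℝ) 1) : cdf (μ.map T.tau) t = μ.real (T.D t) := by
  rw [cdf_eq_real, map_measureReal_apply T.measurable_tau measurableSet_Iic, T.preimage_tau_Iic ht]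

lemma muQ_eq_one_sub_cdf {t : ℝ} (ht : t ∈ Icc (0:ℝ) 1) :
    T.muQ t = 1 - cdf (μ.map T.tau) t := by
  rw [muQ, Q, ← measureReal_def, probReal_compl_eq_one_sub (T.measurableSet_D ht), T.cdf_map_tau ht]

lemma cdf_map_tau_lt_one {t : ℝ} (h0 : 0 ≤ t) (h1 : t < 1) : cdf (μ.map T.tau) t < 1 := by
  rw [T.cdf_map_tau ⟨h0, h1.le⟩]
  exact ENNReal.toReal_lt_of_lt_ofReal (by simpa using T.meas_lt_one t h0 h1)

end TrimmedFamily

/-- For every `t ∈ (0,1)`, `∫_{D_t} (1/μ_{τ(x)}) μ(dx) = log (1/μ_t)`. -/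
theorem integral_inv_muQ_tau
    {d : ℕ} (μ : Measure (Fin d → ℝ)) [IsProbabilityMeasure μ]
    (T : TrimmedFamily d μ) (t : ℝ) (ht0 : 0 < t) (ht1 : t < 1) :
    ∫ x in T.D t, 1 / T.muQ (T.tau x) ∂μ = Real.log (1 / T.muQ t) := by
  have ht : t ∈ Icc (0:ℝ) 1 := ⟨ht0.le, ht1.le⟩
  have hFt := T.cdf_map_tau_lt_one ht0.le ht1
  set ν := μ.map T.tau
  calc ∫ x in T.D t, 1 / T.muQ (T.tau x) ∂μ
      = ∫ x in T.tau ⁻¹' Iic t, (1 - cdf ν (T.tau x))⁻¹ ∂μ := by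
        simp only [ν, T.preimage_tau_Iic ht, T.muQ_eq_one_sub_cdf (T.tau_mem_Icc _), one_div]
    _ = ∫ s in Iic t, (1 - cdf ν s)⁻¹ ∂ν :=
        (setIntegral_map measurableSet_Iic
          ((monotone_cdf ν).measurable.const_sub 1).inv.aestronglyMeasurable
          T.measurable_tau.aemeasurable).symm
    _ = ∫ u in Icc 0 (cdf ν t), (1 - u)⁻¹ :=
        setIntegral_Iic_comp_cdf ((measurable_const.sub measurable_id).inv) t
    _ = Real.log (1 / T.muQ t) := by
        rw [integral_Icc_inv_one_sub (cdf_nonneg ν t) hFt, T.muQ_eq_one_sub_cdf ht, one_div,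
          Real.log_inv]
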